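/- arXiv:math/0303077 — 5 statements merged into one kernel-verified Lean document; each statement's English description precedes it below -/
import Mathlib

section
/- Let X be a finite set and let i, r : X → X be involutions. For every ir class C of X, exactly one of the following holds: (a) C is a singleton {x} with i(x) = x and r(x) = x; (b) C has at least two elements and there are exactly two elements z ∈ C satisfying i(z) = z or r(z) = z; (c) no element z ∈ C satisfies i(z) = z or r(z) = z, and the cardinality of C is even. -/
/-- The relation generated by introduction/removal partners: `a` is related to `b`
if `b` is the `i`-partner or the `r`-partner of `a`. -/
def irRel {X : Type*} (i r : X → X) : X → X → Prop :=
  fun a b => i a = b ∨ r a = b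

/-- The ir class of `x`: the equivalence class of `x` under the equivalence relation
generated by `x ∼ i x` and `x ∼ r x`. -/
def irClass {X : Type*} (i r : X → X) (x : X) : Set X :=
  {y | Relation.EqvGen (irRel i r) x y}

/-!
The permutation `f = r ∘ i` is conjugated to its inverse by both `i` and `r`. If an ir class
contains a point `z` with `i z = z`, it is the `f`-orbit of `z`; indexing that orbit by `ZMod m`
through `k ↦ f ^ k z`, the involutions `i` and `r` become `k ↦ -k` and `k ↦ 1 - k`, whose fixed
points are the solutions of `2 * k = 0` and `2 * k = 1`: exactly two of them as soon as `m ≥ 2`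
(and a point fixed by `r` is handled by exchanging `i` and `r`). If the class has no fixed point,
`i` is a fixed-point-free involution of it, so its cardinality is even.
-/

open Function Set Equiv MulAction

theorem exactly_one_of_or3 {a b c : Prop} (h : a ∨ b ∨ c) (hab : a → ¬b) (hac : a → ¬c)
    (hbc : b → ¬c) : (a ∧ ¬b ∧ ¬c) ∨ (¬a ∧ b ∧ ¬c) ∨ (¬a ∧ ¬b ∧ c) := by
  tauto

theorem ZMod.ncard_setOf_two_mul_eq_zero_or_one {m : ℕ} (hm : 2 ≤ m) :
    {k : ZMod m | 2 * k = 0 ∨ 2 * k = 1}.ncard = 2 := by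
  have : NeZero m := ⟨by omega⟩
  have key : ∀ v < m, 2 * v % m = 0 ∨ 2 * v % m = 1 ↔ v = 0 ∨ v = (m + 1) / 2 := by
    intro v hv
    have hdiv := Nat.mod_add_div (2 * v) m
    have hlt : 2 * v / m < 2 := Nat.div_lt_of_lt_mul (by omega)
    have hmod : 2 * v % m < m := Nat.mod_lt _ (by omega)
    generalize 2 * v % m = t at *
    interval_cases 2 * v / m <;> omega
  have hset : {k : ZMod m | 2 * k = 0 ∨ 2 * k = 1} = {0, (((m + 1) / 2 : ℕ) : ZMod m)} := by
    ext k
    rw [← ZMod.natCast_zmod_val k]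
    simp only [mem_ofPred_eq, mem_insert_iff, mem_singleton_iff]
    rw [← Nat.cast_ofNat, ← Nat.cast_mul, ← Nat.cast_zero, ← Nat.cast_one]
    simp only [ZMod.natCast_eq_natCast_iff', Nat.zero_mod,
      Nat.one_mod_eq_one.mpr (by omega : m ≠ 1), Nat.mod_eq_of_lt k.val_lt,
      Nat.mod_eq_of_lt (by omega : (m + 1) / 2 < m)]
    exact key k.val k.val_lt
  rw [hset, ncard_pair]
  rw [ne_comm, Ne, ← Nat.cast_zero, ZMod.natCast_eq_natCast_iff']
  simp only [Nat.zero_mod, Nat.mod_eq_of_lt (by omega : (m + 1) / 2 < m)]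
  omega

theorem MulAction.coe_orbitZPowersEquiv_symm_intCast {G β : Type*} [Group G] [MulAction G β]
    (a : G) (b : β) (n : ℤ) : ((orbitZPowersEquiv a b).symm n : β) = a ^ n • b := by
  rw [orbitZPowersEquiv_symm_apply']
  rfl

section

variable {X : Type*} {i r : X → X}

theorem irClass_swap : irClass r i = irClass i r := by
  have : irRel r i = irRel i r := by
    ext a b; exact or_comm
  unfold irClass; rw [this]

theorem mem_irClass_self (x : X) : x ∈ irClass i r x := Relation.EqvGen.refl x

theorem irClass_eq_of_mem {x y : X} (h : y ∈ irClass i r x) : irClass i r y = irClass i r x := by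
  ext z
  exact ⟨fun hz => .trans _ _ _ h hz, fun hz => .trans _ _ _ (.symm _ _ h) hz⟩

theorem mapsTo_left_irClass (x : X) : MapsTo i (irClass i r x) (irClass i r x) :=
  fun _ hy => hy.trans _ _ _ (.rel _ _ (.inl rfl))

theorem mapsTo_right_irClass (x : X) : MapsTo r (irClass i r x) (irClass i r x) :=
  fun _ hy => hy.trans _ _ _ (.rel _ _ (.inr rfl))

theorem irClass_subset_of_mapsTo (hi : Involutive i) (hr : Involutive r) {x : X} {S : Set X}
    (hx : x ∈ S) (hiS : MapsTo i S S) (hrS : MapsTo r S S) : irClass i r x ⊆ S := by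
  suffices ∀ a b, Relation.EqvGen (irRel i r) a b → (a ∈ S ↔ b ∈ S) from
    fun y hy => (this x y hy).1 hx
  intro a b hab
  induction hab with
  | rel a b hab =>
    rcases hab with rfl | rfl
    · exact ⟨fun h => hiS h, fun h => hi a ▸ hiS h⟩
    · exact ⟨fun h => hrS h, fun h => hr a ▸ hrS h⟩
  | refl => rfl
  | symm _ _ _ ih => exact ih.symm
  | trans _ _ _ _ _ ih₁ ih₂ => exact ih₁.trans ih₂

theorem Function.Involutive.even_ncard_of_forall_ne {s : Set X} [Finite s] (hi : Involutive i)
    (hs : MapsTo i s s) (hfree : ∀ x ∈ s, i x ≠ x) : Even s.ncard := by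
  have : Fintype s := Fintype.ofFinite s
  let σ : Perm s := hi.toPerm.subtypePerm fun x => ⟨fun h => hi x ▸ hs h, fun h => hs h⟩
  have hσ : σ ^ 2 ^ 1 = 1 := by
    ext x; exact hi x.1
  rw [even_iff_two_dvd, ncard_eq_toFinset_card', toFinset_card]
  by_contra h
  obtain ⟨x, hx⟩ := Equiv.Perm.exists_fixed_point_of_prime (p := 2) h hσ
  exact hfree x x.2 (congrArg Subtype.val hx)

def irPerm (hi : Involutive i) (hr : Involutive r) : Perm X :=
  hr.toPerm * hi.toPerm

variable (hi : Involutive i) (hr : Involutive r)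

theorem irPerm_apply (x : X) : irPerm hi hr x = r (i x) := rfl

theorem semiconjBy_irPerm_left : SemiconjBy hi.toPerm (irPerm hi hr) (irPerm hi hr)⁻¹ := by
  ext x
  simp [irPerm, Perm.mul_apply]

theorem semiconjBy_irPerm_right : SemiconjBy hr.toPerm (irPerm hi hr) (irPerm hi hr)⁻¹ := by
  ext x
  simp [irPerm, Perm.mul_apply, hr _]

theorem apply_zpow_irPerm_left (n : ℤ) (x : X) :
    i ((irPerm hi hr ^ n) x) = (irPerm hi hr ^ (-n)) (i x) := by
  rw [zpow_neg, ← inv_zpow]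
  exact DFunLike.congr_fun ((semiconjBy_irPerm_left hi hr).zpow_right n) x

theorem apply_zpow_irPerm_right (n : ℤ) (x : X) :
    r ((irPerm hi hr ^ n) x) = (irPerm hi hr ^ (-n)) (r x) := by
  rw [zpow_neg, ← inv_zpow]
  exact DFunLike.congr_fun ((semiconjBy_irPerm_right hi hr).zpow_right n) x

theorem mapsTo_zpow_irPerm_irClass (x : X) (n : ℤ) :
    MapsTo (irPerm hi hr ^ n) (irClass i r x) (irClass i r x) := by
  have hf : MapsTo (irPerm hi hr) (irClass i r x) (irClass i r x) :=
    (mapsTo_right_irClass x).comp (mapsTo_left_irClass x)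
  have hf_inv : MapsTo ⇑(irPerm hi hr)⁻¹ (irClass i r x) (irClass i r x) := by
    intro y hy
    simpa [irPerm, Perm.inv_def] using (mapsTo_left_irClass x).comp (mapsTo_right_irClass x) hy
  induction n using Int.induction_on with
  | zero => simpa using mapsTo_id _
  | succ n ih => simpa [zpow_add_one] using ih.comp hf
  | pred n ih => simpa [zpow_sub_one] using ih.comp hf_inv

end

section

variable {X : Type*} {i r : X → X}

theorem ncard_fixed_irClass_eq_two [Finite X] (hi : Involutive i) (hr : Involutive r) {z : X}
    (hz : i z = z) (h2 : 2 ≤ (irClass i r z).ncard) :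
    {y ∈ irClass i r z | i y = y ∨ r y = y}.ncard = 2 := by
  set f := irPerm hi hr
  set φ : ZMod (minimalPeriod (f • ·) z) → X := fun k => (orbitZPowersEquiv f z).symm k
  have hφ (n : ℤ) : φ n = (f ^ n) z := coe_orbitZPowersEquiv_symm_intCast f z n
  have hφ_inj : Injective φ := Subtype.val_injective.comp (orbitZPowersEquiv f z).symm.injective
  have hφ_left (k) : i (φ k) = φ (-k) := by
    obtain ⟨n, rfl⟩ := ZMod.intCast_surjective k
    rw [← Int.cast_neg, hφ, hφ, apply_zpow_irPerm_left hi hr, hz]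
  have hφ_right (k) : r (φ k) = φ (1 - k) := by
    obtain ⟨n, rfl⟩ := ZMod.intCast_surjective k
    have hrz : r z = f z := by rw [irPerm_apply, hz]
    rw [← Int.cast_one, ← Int.cast_sub, hφ, hφ, apply_zpow_irPerm_right hi hr, hrz,
      ← Perm.mul_apply, ← zpow_add_one, neg_add_eq_sub]
  have hclass : irClass i r z = range φ := by
    refine subset_antisymm (irClass_subset_of_mapsTo hi hr ⟨0, by simpa using hφ 0⟩ ?_ ?_) ?_
    · rintro _ ⟨k, rfl⟩; exact ⟨-k, (hφ_left k).symm⟩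
    · rintro _ ⟨k, rfl⟩; exact ⟨1 - k, (hφ_right k).symm⟩
    · rintro _ ⟨k, rfl⟩
      obtain ⟨n, rfl⟩ := ZMod.intCast_surjective k
      rw [hφ]
      exact mapsTo_zpow_irPerm_irClass hi hr z n (mem_irClass_self z)
  have hm : 2 ≤ minimalPeriod (f • ·) z := by
    rwa [hclass, ncard_range_of_injective hφ_inj, Nat.card_zmod] at h2
  have hfix : {y ∈ irClass i r z | i y = y ∨ r y = y} = φ '' {k | 2 * k = 0 ∨ 2 * k = 1} := by
    rw [hclass]
    ext y
    have hfixφ (k) : i (φ k) = φ k ∨ r (φ k) = φ k ↔ 2 * k = 0 ∨ 2 * k = 1 := by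
      rw [hφ_left, hφ_right, hφ_inj.eq_iff, hφ_inj.eq_iff, neg_eq_iff_add_eq_zero,
        sub_eq_iff_eq_add, two_mul, eq_comm (a := (1 : ZMod _))]
    constructor
    · rintro ⟨⟨k, rfl⟩, h⟩
      exact ⟨k, (hfixφ k).1 h, rfl⟩
    · rintro ⟨k, hk, rfl⟩
      exact ⟨⟨k, rfl⟩, (hfixφ k).2 hk⟩
  rw [hfix, ncard_image_of_injective _ hφ_inj, ZMod.ncard_setOf_two_mul_eq_zero_or_one hm]

theorem ncard_fixed_irClass_eq_two_of_mem [Finite X] (hi : Involutive i) (hr : Involutive r)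
    {x z : X} (hzx : z ∈ irClass i r x) (hz : i z = z ∨ r z = z)
    (h2 : 2 ≤ (irClass i r x).ncard) :
    {y ∈ irClass i r x | i y = y ∨ r y = y}.ncard = 2 := by
  rw [← irClass_eq_of_mem hzx] at h2 ⊢
  rcases hz with hz | hz
  · exact ncard_fixed_irClass_eq_two hi hr hz h2
  · rw [← irClass_swap] at h2 ⊢
    simpa only [or_comm] using ncard_fixed_irClass_eq_two hr hi hz h2

theorem irClass_eq_singleton_of_ncard_lt_two [Finite X] {x : X}
    (h : (irClass i r x).ncard < 2) : irClass i r x = {x} ∧ i x = x ∧ r x = x := by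
  have hsub := (ncard_le_one (toFinite _)).1 (Nat.le_of_lt_succ h)
  have hx := mem_irClass_self (i := i) (r := r) x
  exact ⟨eq_singleton_iff_unique_mem.2 ⟨hx, fun y hy => hsub y hy x hx⟩,
    hsub _ (mapsTo_left_irClass x hx) x hx, hsub _ (mapsTo_right_irClass x hx) x hx⟩

end

/-- For every ir class `C`, exactly one of the following holds:
(a) `C` is a singleton `{x}` with `i x = x` and `r x = x`;
(b) `C` has at least two elements and exactly two elements `z ∈ C` satisfy
    `i z = z` or `r z = z`;
(c) no element of `C` is fixed by `i` or by `r`, and the cardinality of `C` is even. -/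
theorem ir_class_trichotomy {X : Type*} [Fintype X] (i r : X → X)
    (hi : Function.Involutive i) (hr : Function.Involutive r)
    (C : Set X) (hC : ∃ x, C = irClass i r x) :
    ((∃ x, C = {x} ∧ i x = x ∧ r x = x) ∧
      ¬(2 ≤ C.ncard ∧ ({z ∈ C | i z = z ∨ r z = z}).ncard = 2) ∧
      ¬((∀ z ∈ C, i z ≠ z ∧ r z ≠ z) ∧ Even C.ncard)) ∨
    (¬(∃ x, C = {x} ∧ i x = x ∧ r x = x) ∧
      (2 ≤ C.ncard ∧ ({z ∈ C | i z = z ∨ r z = z}).ncard = 2) ∧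
      ¬((∀ z ∈ C, i z ≠ z ∧ r z ≠ z) ∧ Even C.ncard)) ∨
    (¬(∃ x, C = {x} ∧ i x = x ∧ r x = x) ∧
      ¬(2 ≤ C.ncard ∧ ({z ∈ C | i z = z ∨ r z = z}).ncard = 2) ∧
      ((∀ z ∈ C, i z ≠ z ∧ r z ≠ z) ∧ Even C.ncard)) := by
  obtain ⟨x, rfl⟩ := hC
  refine exactly_one_of_or3 ?_ ?_ ?_ ?_
  · by_cases hfix : ∃ z ∈ irClass i r x, i z = z ∨ r z = z
    · obtain ⟨z, hzx, hz⟩ := hfix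
      rcases lt_or_ge (irClass i r x).ncard 2 with h2 | h2
      · exact .inl ⟨x, irClass_eq_singleton_of_ncard_lt_two h2⟩
      · exact .inr (.inl ⟨h2, ncard_fixed_irClass_eq_two_of_mem hi hr hzx hz h2⟩)
    · push Not at hfix
      exact .inr (.inr ⟨hfix, hi.even_ncard_of_forall_ne (mapsTo_left_irClass x)
        fun z hz => (hfix z hz).1⟩)
  · rintro ⟨y, hy, -, -⟩ ⟨h2, -⟩
    rw [hy, ncard_singleton] at h2
    omega
  · rintro ⟨y, hy, hiy, -⟩ ⟨hfree, -⟩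
    exact (hfree y (hy ▸ rfl)).1 hiy
  · rintro ⟨-, hF⟩ ⟨hfree, -⟩
    obtain ⟨z, hzx, hz⟩ := nonempty_of_ncard_ne_zero (hF ▸ two_ne_zero)
    exact hz.elim (hfree z hzx).1 (hfree z hzx).2
end

section
/- Let X be a finite set and let i, r : X → X be involutions. If an ir class C contains no element fixed by i and no element fixed by r (i.e., i(z) ≠ z and r(z) ≠ z for all z ∈ C), then the cardinality of C is even. -/
lemma even_card_of_inv {X : Type*} [DecidableEq X] (f : X → X)
    (hf : Function.Involutive f) :
    ∀ s : Finset X, (∀ x ∈ s, f x ∈ s) → (∀ x ∈ s, f x ≠ x) → Even s.card := by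
  intro s
  induction s using Finset.strongInduction with
  | _ s ih =>
    intro hmem hne
    rcases s.eq_empty_or_nonempty with h | ⟨z, hz⟩
    · simp [h]
    · have hfz : f z ∈ s := hmem z hz
      have hzne : f z ≠ z := hne z hz
      set t := s \ {z, f z} with ht
      have hsub : t ⊂ s := by
        refine Finset.ssubset_iff_of_subset Finset.sdiff_subset |>.mpr ⟨z, hz, ?_⟩
        simp [ht]
      have hte : Even t.card := by
        apply ih t hsub
        · intro x hx
          simp only [ht, Finset.mem_sdiff, Finset.mem_insert, Finset.mem_singleton,
            not_or] at hx ⊢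
          refine ⟨hmem x hx.1, ?_, ?_⟩
          · intro h; apply hx.2.2; rw [← h, hf]
          · intro h; exact hx.2.1 (hf.injective h)
        · intro x hx
          exact hne x (Finset.mem_sdiff.mp hx).1
      have hcard : s.card = t.card + 2 := by
        have h1 : ({z, f z} : Finset X) ⊆ s := by
          intro y hy; simp at hy; rcases hy with rfl | rfl <;> assumption
        have h2 : t.card = s.card - 2 := by
          rw [ht, Finset.card_sdiff_of_subset h1, Finset.card_insert_of_notMem (by simp [hzne.symm]),
            Finset.card_singleton]
        have h3 : 2 ≤ s.card := by
          calc 2 = ({z, f z} : Finset X).card := (Finset.card_pair hzne.symm).symm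
          _ ≤ s.card := Finset.card_le_card h1
        omega
      rw [hcard]
      exact hte.add (Even.add_self 1)

/-- If an ir class `C` contains no element fixed by `i` and no element fixed by `r`,
then the cardinality of `C` is even. -/
theorem ir_class_no_fixed_even_card {X : Type*} [Fintype X] (i r : X → X)
    (hi : Function.Involutive i) (hr : Function.Involutive r)
    (C : Set X) (hC : ∃ x, C = irClass i r x)
    (hfix : ∀ z ∈ C, i z ≠ z ∧ r z ≠ z) :
    Even C.ncard := by
  classical
  obtain ⟨x, rfl⟩ := hC
  have hclosed : ∀ y ∈ irClass i r x, i y ∈ irClass i r x := by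
    intro y hy
    exact Relation.EqvGen.trans _ _ _ hy (Relation.EqvGen.rel _ _ (Or.inl rfl))
  have : (irClass i r x).ncard = (irClass i r x).toFinset.card := by
    rw [Set.ncard_eq_toFinset_card']
  rw [this]
  apply even_card_of_inv i hi
  · intro z hz
    rw [Set.mem_toFinset] at *
    exact hclosed z hz
  · intro z hz
    rw [Set.mem_toFinset] at hz
    exact (hfix z hz).1
end

section
/- Let X be a finite set and let i, r : X → X be involutions. If an ir class C has odd cardinality n with n ≥ 3, then there exist two distinct elements x, y ∈ C such that i(x) = x or r(x) = x, and i(y) = y or r(y) = y. -/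
private lemma even_card_no_fixed {X : Type*} [DecidableEq X] (f : X → X)
    (hf : Function.Involutive f) (s : Finset X)
    (hclosed : ∀ x ∈ s, f x ∈ s) (hnf : ∀ x ∈ s, f x ≠ x) : Even s.card := by
  induction s using Finset.strongInduction with
  | _ s ih =>
    rcases s.eq_empty_or_nonempty with rfl | ⟨x, hx⟩
    · simp
    · have hfx : f x ∈ s := hclosed x hx
      have hne : f x ≠ x := hnf x hx
      set s' := (s.erase x).erase (f x) with hs'
      have hss : s' ⊆ s := (Finset.erase_subset _ _).trans (Finset.erase_subset _ _)
      have hsub : s' ⊂ s :=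
        (Finset.ssubset_iff_of_subset hss).mpr ⟨x, hx, by simp [hs', hne.symm]⟩
      have hclosed' : ∀ y ∈ s', f y ∈ s' := by
        intro y hy
        simp only [hs', Finset.mem_erase] at hy ⊢
        refine ⟨?_, ?_, hclosed y hy.2.2⟩
        · intro h; exact hy.2.1 (hf.injective h)
        · intro h; exact hy.1 (by rw [← hf y, h])
      have hnf' : ∀ y ∈ s', f y ≠ y := fun y hy => hnf y (hss hy)
      have hkey := ih s' hsub hclosed' hnf'
      have hcard : s.card = s'.card + 2 := by
        have h1 : f x ∈ s.erase x := Finset.mem_erase.mpr ⟨hne, hfx⟩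
        rw [hs', Finset.card_erase_of_mem h1, Finset.card_erase_of_mem hx]
        have h2 : 1 ≤ (s.erase x).card := Finset.card_pos.mpr ⟨f x, h1⟩
        have h3 : (s.erase x).card = s.card - 1 := Finset.card_erase_of_mem hx
        omega
      obtain ⟨k, hk⟩ := hkey
      exact ⟨k + 1, by omega⟩

private lemma exists_fixed_of_odd {X : Type*} [DecidableEq X] (f : X → X)
    (hf : Function.Involutive f) (s : Finset X)
    (hclosed : ∀ x ∈ s, f x ∈ s) (hodd : Odd s.card) : ∃ x ∈ s, f x = x := by
  by_contra h
  push_neg at h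
  exact (Nat.not_even_iff_odd.mpr hodd) (even_card_no_fixed f hf s hclosed h)

/-- An ir class of odd cardinality `n ≥ 3` contains two distinct elements each of
which is fixed by `i` or by `r`. -/
theorem ir_class_odd_two_fixed {X : Type*} [Fintype X] (i r : X → X)
    (hi : Function.Involutive i) (hr : Function.Involutive r)
    (C : Set X) (hC : ∃ x, C = irClass i r x)
    (n : ℕ) (hn : C.ncard = n) (hodd : Odd n) (h3 : 3 ≤ n) :
    ∃ x ∈ C, ∃ y ∈ C, x ≠ y ∧ (i x = x ∨ r x = x) ∧ (i y = y ∨ r y = y) := by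
  classical
  obtain ⟨x₀, rfl⟩ := hC
  -- closure
  have hclI : ∀ y ∈ irClass i r x₀, i y ∈ irClass i r x₀ := fun y hy =>
    Relation.EqvGen.trans _ _ _ hy (Relation.EqvGen.rel _ _ (Or.inl rfl))
  have hclR : ∀ y ∈ irClass i r x₀, r y ∈ irClass i r x₀ := fun y hy =>
    Relation.EqvGen.trans _ _ _ hy (Relation.EqvGen.rel _ _ (Or.inr rfl))
  set s : Finset X := (irClass i r x₀).toFinset with hs
  have hmem : ∀ y, y ∈ s ↔ y ∈ irClass i r x₀ := fun y => Set.mem_toFinset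
  have hcard : s.card = n := by rw [← hn, Set.ncard_eq_toFinset_card']
  have hoddc : Odd s.card := hcard ▸ hodd
  obtain ⟨x, hxs, hxf⟩ := exists_fixed_of_odd i hi s (fun y hy =>
    (hmem _).mpr (hclI y ((hmem _).mp hy))) hoddc
  obtain ⟨y, hys, hyf⟩ := exists_fixed_of_odd r hr s (fun z hz =>
    (hmem _).mpr (hclR z ((hmem _).mp hz))) hoddc
  by_cases hxy : x = y
  · -- then x is fixed by both i and r, so the class is {x}, contradiction
    exfalso
    subst hxy
    have hkey : ∀ u v, Relation.EqvGen (irRel i r) u v → (u = x ↔ v = x) := by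
      intro u v h
      induction h with
      | rel a b hab =>
        constructor
        · rintro rfl
          rcases hab with h | h
          · rw [← h, hxf]
          · rw [← h, hyf]
        · rintro rfl
          rcases hab with h | h
          · rw [← hxf, ← h, hi]
          · rw [← hyf, ← h, hr]
      | refl a => exact Iff.rfl
      | symm a b _ ihab => exact ihab.symm
      | trans a b c _ _ ih1 ih2 => exact ih1.trans ih2
    have hxC : x ∈ irClass i r x₀ := (hmem _).mp hxs
    have hsub : irClass i r x₀ ⊆ {x} := by
      intro z hz
      have h1 : Relation.EqvGen (irRel i r) x z :=
        Relation.EqvGen.trans _ _ _ (Relation.EqvGen.symm _ _ hxC) hz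
      exact (hkey x z h1).mp rfl
    have : (irClass i r x₀).ncard ≤ 1 := by
      calc (irClass i r x₀).ncard ≤ ({x} : Set X).ncard :=
            Set.ncard_le_ncard hsub (Set.finite_singleton x)
        _ = 1 := Set.ncard_singleton x
    omega
  · exact ⟨x, (hmem _).mp hxs, y, (hmem _).mp hys, hxy, Or.inl hxf, Or.inr hyf⟩
end

section
/- Let X be a finite set and let i, r : X → X be involutions. Then there exists an alternating function s : X → Bool, i.e., a function such that for every x ∈ X with i(x) ≠ x one has s(i(x)) ≠ s(x), and for every x ∈ X with r(x) ≠ x one has s(r(x)) ≠ s(x). -/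
/-- A sign assignment `s : X → Bool` is alternating (with respect to the involutions
`i` and `r`) if partners that are distinct receive different signs: whenever
`i x ≠ x` we have `s (i x) ≠ s x`, and whenever `r x ≠ x` we have `s (r x) ≠ s x`. -/
def IsAlternating {X : Type*} (i r : X → X) (s : X → Bool) : Prop :=
  ∀ x : X, (i x ≠ x → s (i x) ≠ s x) ∧ (r x ≠ x → s (r x) ≠ s x)

universe u

private def gR {X : Type u} [DecidableEq X] (r : X → X) (x0 y0 : X) (w : X) : X :=
  if r w = x0 then (if r y0 = y0 then w else r y0)
  else if r w = y0 then (if r x0 = x0 then w else r x0)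
  else r w

private theorem gR_spec {X : Type u} [DecidableEq X] (r : X → X)
    (hr : Function.Involutive r) (x0 y0 : X) (hxy : x0 ≠ y0) (w : X)
    (hw1 : w ≠ x0) (hw2 : w ≠ y0) :
    gR r x0 y0 (gR r x0 y0 w) = w ∧ gR r x0 y0 w ≠ x0 ∧ gR r x0 y0 w ≠ y0 := by
  have hwx : r w = x0 → w = r x0 := fun h => by rw [← h, hr]
  have hwy : r w = y0 → w = r y0 := fun h => by rw [← h, hr]
  by_cases h1 : r w = x0
  · by_cases hb : r y0 = y0
    · have hg : gR r x0 y0 w = w := by rw [gR, if_pos h1, if_pos hb]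
      rw [hg]
      exact ⟨hg, hw1, hw2⟩
    · have hg : gR r x0 y0 w = r y0 := by rw [gR, if_pos h1, if_neg hb]
      have hyx : r y0 ≠ x0 := fun h => hw2 ((hwx h1).trans (congrArg r h.symm ▸ (hr y0).symm).symm)
      have hax : r x0 ≠ x0 := fun h => hw1 ((hwx h1).trans h)
      have hry : r (r y0) = y0 := hr y0
      have hg2 : gR r x0 y0 (r y0) = r x0 := by
        rw [gR, if_neg (by rw [hry]; exact fun h => hxy h.symm), if_pos hry, if_neg hax]
      rw [hg]
      exact ⟨hg2.trans (hwx h1).symm, hyx, hb⟩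
  · by_cases h2 : r w = y0
    · by_cases ha : r x0 = x0
      · have hg : gR r x0 y0 w = w := by rw [gR, if_neg h1, if_pos h2, if_pos ha]
        rw [hg]
        exact ⟨hg, hw1, hw2⟩
      · have hg : gR r x0 y0 w = r x0 := by rw [gR, if_neg h1, if_pos h2, if_neg ha]
        have hxy' : r x0 ≠ y0 := fun h => hw1 ((hwy h2).trans (congrArg r h.symm ▸ (hr x0).symm).symm)
        have hby : r y0 ≠ y0 := fun h => hw2 ((hwy h2).trans h)
        have hrx : r (r x0) = x0 := hr x0
        have hg2 : gR r x0 y0 (r x0) = r y0 := by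
          rw [gR, if_pos hrx, if_neg hby]
        rw [hg]
        exact ⟨hg2.trans (hwy h2).symm, ha, hxy'⟩
    · have hg : gR r x0 y0 w = r w := by rw [gR, if_neg h1, if_neg h2]
      have hrw : r (r w) = w := hr w
      have hg2 : gR r x0 y0 (r w) = r (r w) := by
        rw [gR, if_neg (by rw [hrw]; exact hw1), if_neg (by rw [hrw]; exact hw2)]
      rw [hg]
      exact ⟨hg2.trans hrw, h1, h2⟩

private def restI {X : Type u} (i : X → X) (x0 : X) (hi : Function.Involutive i)
    (z : {z : X // z ≠ x0 ∧ z ≠ i x0}) : {z : X // z ≠ x0 ∧ z ≠ i x0} :=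
  ⟨i z.1, fun h => z.2.2 ((hi z.1).symm.trans (congrArg i h)),
          fun h => z.2.1 (((hi z.1).symm.trans (congrArg i h)).trans (hi x0))⟩

private def restR {X : Type u} [DecidableEq X] (r : X → X) (hr : Function.Involutive r)
    (x0 y0 : X) (hxy : x0 ≠ y0)
    (z : {z : X // z ≠ x0 ∧ z ≠ y0}) : {z : X // z ≠ x0 ∧ z ≠ y0} :=
  ⟨gR r x0 y0 z.1, (gR_spec r hr x0 y0 hxy z.1 z.2.1 z.2.2).2.1,
    (gR_spec r hr x0 y0 hxy z.1 z.2.1 z.2.2).2.2⟩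

private theorem restI_inv {X : Type u} (i : X → X) (x0 : X) (hi : Function.Involutive i) :
    Function.Involutive (restI i x0 hi) := fun z => Subtype.ext (hi z.1)

private theorem restR_inv {X : Type u} [DecidableEq X] (r : X → X)
    (hr : Function.Involutive r) (x0 y0 : X) (hxy : x0 ≠ y0) :
    Function.Involutive (restR r hr x0 y0 hxy) := fun z =>
  Subtype.ext ((gR_spec r hr x0 y0 hxy z.1 z.2.1 z.2.2).1)

private theorem aux (n : ℕ) : ∀ (X : Type u) [Fintype X], Fintype.card X ≤ n →
    ∀ i r : X → X, Function.Involutive i → Function.Involutive r →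
    ∃ s : X → Bool, IsAlternating i r s := by
  induction n with
  | zero =>
    intro X _ hcard i r hi hr
    have he : IsEmpty X := Fintype.card_eq_zero_iff.mp (Nat.le_zero.mp hcard)
    exact ⟨fun _ => true, fun x => he.elim x⟩
  | succ n ih =>
    intro X _ hcard i r hi hr
    classical
    by_cases hI : ∀ x, i x = x
    · obtain ⟨e⟩ : Nonempty (X ≃ Fin (Fintype.card X)) := ⟨Fintype.equivFin X⟩
      refine ⟨fun x => decide (e x < e (r x)), fun x => ⟨fun h => absurd (hI x) h, fun h => ?_⟩⟩
      intro hs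
      have hne : e (r x) ≠ e x := fun hh => h (e.injective hh)
      simp only [hr x, decide_eq_decide] at hs
      rcases hne.lt_or_gt with h1 | h1
      · exact absurd (hs.mpr (hs.mp h1)) (by omega)
      · exact absurd (hs.mp (hs.mpr h1)) (by omega)
    · push_neg at hI
      obtain ⟨x0, hx0⟩ := hI
      set y0 := i x0 with hy0def
      have hxy : x0 ≠ y0 := fun h => hx0 h.symm
      have hcard' : Fintype.card {z : X // z ≠ x0 ∧ z ≠ y0} ≤ n := by
        have hlt : Fintype.card {z : X // z ≠ x0 ∧ z ≠ y0} < Fintype.card X :=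
          Fintype.card_subtype_lt (x := x0) (by simp)
        omega
      obtain ⟨s', hs'⟩ := ih {z : X // z ≠ x0 ∧ z ≠ y0} hcard'
        (restI i x0 hi) (restR r hr x0 y0 hxy) (restI_inv i x0 hi) (restR_inv r hr x0 y0 hxy)
      obtain ⟨sx, sy, k1, k2, k3⟩ :
          ∃ sx sy : Bool, sx ≠ sy ∧
            (∀ (h1 : r x0 ≠ x0) (h2 : r x0 ≠ y0), sx = !s' ⟨r x0, h1, h2⟩) ∧
            (∀ (h1 : r y0 ≠ x0) (h2 : r y0 ≠ y0), sy = !s' ⟨r y0, h1, h2⟩) := by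
        by_cases ha : r x0 = x0 ∨ r x0 = y0
        · by_cases hb : r y0 = y0 ∨ r y0 = x0
          · exact ⟨true, false, by simp, fun h1 h2 => (ha.elim h1 h2).elim,
              fun h1 h2 => (hb.elim h2 h1).elim⟩
          · push_neg at hb
            exact ⟨!(!s' ⟨r y0, hb.2, hb.1⟩), !s' ⟨r y0, hb.2, hb.1⟩, by simp,
              fun h1 h2 => (ha.elim h1 h2).elim, fun h1 h2 => rfl⟩
        · push_neg at ha
          have hbx : r y0 ≠ x0 := fun h => ha.2 (by rw [← h, hr])
          by_cases hb : r y0 = y0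
          · exact ⟨!s' ⟨r x0, ha.1, ha.2⟩, s' ⟨r x0, ha.1, ha.2⟩, by simp,
              fun h1 h2 => rfl, fun h1 h2 => absurd hb h2⟩
          · have hval : restR r hr x0 y0 hxy ⟨r x0, ha.1, ha.2⟩ = ⟨r y0, hbx, hb⟩ := by
              apply Subtype.ext
              show gR r x0 y0 (r x0) = r y0
              rw [gR, if_pos (hr x0), if_neg hb]
            have hne : (⟨r y0, hbx, hb⟩ : {z : X // z ≠ x0 ∧ z ≠ y0}) ≠ ⟨r x0, ha.1, ha.2⟩ :=
              fun h => hxy (hr.injective (congrArg Subtype.val h)).symm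
            have key : s' ⟨r y0, hbx, hb⟩ ≠ s' ⟨r x0, ha.1, ha.2⟩ := by
              have h2 := (hs' ⟨r x0, ha.1, ha.2⟩).2
              rw [hval] at h2
              exact h2 hne
            refine ⟨!s' ⟨r x0, ha.1, ha.2⟩, !s' ⟨r y0, hbx, hb⟩, ?_,
              fun h1 h2 => rfl, fun h1 h2 => rfl⟩
            simpa using key.symm
      refine ⟨fun z => if hz1 : z = x0 then sx else if hz2 : z = y0 then sy
        else s' ⟨z, hz1, hz2⟩, ?_⟩
      intro z
      constructor
      · -- i part
        intro hiz
        simp only []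
        by_cases hz1 : z = x0
        · rw [hz1] at hiz ⊢
          rw [← hy0def, dif_neg (fun h : y0 = x0 => hxy h.symm), dif_pos rfl, dif_pos rfl]
          exact k1.symm
        · by_cases hz2 : z = y0
          · rw [hz2] at hiz hz1 ⊢
            have hiy : i y0 = x0 := by rw [hy0def]; exact hi x0
            rw [hiy, dif_pos rfl, dif_neg hz1, dif_pos rfl]
            exact k1
          · have h1 : i z ≠ x0 := (restI i x0 hi ⟨z, hz1, hz2⟩).2.1
            have h2 : i z ≠ y0 := (restI i x0 hi ⟨z, hz1, hz2⟩).2.2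
            rw [dif_neg h1, dif_neg h2, dif_neg hz1, dif_neg hz2]
            exact (hs' ⟨z, hz1, hz2⟩).1 (fun h => hiz (congrArg Subtype.val h))
      · -- r part
        intro hrz
        simp only []
        by_cases hz1 : z = x0
        · rw [hz1] at hrz ⊢
          by_cases h2 : r x0 = y0
          · rw [h2, dif_neg (fun h : y0 = x0 => hxy h.symm), dif_pos rfl, dif_pos rfl]
            exact k1.symm
          · rw [dif_neg hrz, dif_neg h2, dif_pos rfl, k2 hrz h2]
            simp
        · by_cases hz2 : z = y0
          · rw [hz2] at hrz hz1 ⊢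
            by_cases h2 : r y0 = x0
            · rw [h2, dif_pos rfl, dif_neg hz1, dif_pos rfl]
              exact k1
            · rw [dif_neg h2, dif_neg hrz, dif_neg hz1, dif_pos rfl, k3 h2 hrz]
              simp
          · by_cases hc1 : r z = x0
            · have hzrx : r x0 = z := by rw [← hc1, hr]
              have h1 : r x0 ≠ x0 := by rw [hzrx]; exact hz1
              have h2 : r x0 ≠ y0 := by rw [hzrx]; exact hz2
              rw [hc1, dif_pos rfl, dif_neg hz1, dif_neg hz2, k2 h1 h2,
                congrArg s' (Subtype.ext hzrx :
                  (⟨r x0, h1, h2⟩ : {z : X // z ≠ x0 ∧ z ≠ y0}) = ⟨z, hz1, hz2⟩)]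
              simp
            · by_cases hc2 : r z = y0
              · have hzry : r y0 = z := by rw [← hc2, hr]
                have h1 : r y0 ≠ x0 := by rw [hzry]; exact hz1
                have h2 : r y0 ≠ y0 := by rw [hzry]; exact hz2
                rw [hc2, dif_neg (fun h : y0 = x0 => hxy h.symm), dif_pos rfl,
                  dif_neg hz1, dif_neg hz2, k3 h1 h2,
                  congrArg s' (Subtype.ext hzry :
                    (⟨r y0, h1, h2⟩ : {z : X // z ≠ x0 ∧ z ≠ y0}) = ⟨z, hz1, hz2⟩)]
                simp
              · have hgz : gR r x0 y0 z = r z := by rw [gR, if_neg hc1, if_neg hc2]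
                rw [dif_neg hc1, dif_neg hc2, dif_neg hz1, dif_neg hz2]
                have h5 := (hs' ⟨z, hz1, hz2⟩).2
                rw [show restR r hr x0 y0 hxy ⟨z, hz1, hz2⟩ = ⟨r z, hc1, hc2⟩ from
                  Subtype.ext hgz] at h5
                exact h5 (fun h => hrz (congrArg Subtype.val h))

/-- For any finite set `X` with involutions `i, r : X → X`, there exists an
alternating function `s : X → Bool`. -/
theorem exists_alternating {X : Type*} [Fintype X] (i r : X → X)
    (hi : Function.Involutive i) (hr : Function.Involutive r) :
    ∃ s : X → Bool, IsAlternating i r s :=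
  aux (Fintype.card X) X le_rfl i r hi hr
end

section
/- Let X be a finite set and let i, r : X → X be involutions, and let m be the number of ir classes of X. Then the number of alternating functions s : X → Bool is exactly 2^m. -/
/-!
Once one alternating function `t` exists, `s ↦ s xor t` identifies the alternating functions with
the functions that are constant on ir classes, and there are `2 ^ m` of those.

The existence of `t` is the real content. Passing to `X × Bool`, where each involution `g` is
replaced by `flipFixed g`, which exchanges the two sheets over the fixed points of `g`, reduces it
to fixed-point-free involutions `σ, τ`. Then `σ` conjugates `ρ = τ * σ` to `ρ⁻¹`, so `ρ ^ k y = σ y`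
would make `ρ ^ j y` a fixed point of `σ` (if `k = 2 j`) or `σ (ρ ^ j y)` a fixed point of `τ`
(if `k = 2 j + 1`). Hence `σ` and `τ` both exchange the cycle of `y` under `ρ` with the different
cycle of `σ y`, and choosing one cycle of each such pair gives `t`.
-/

theorem Bool.ne_iff_xor_eq_xor_of_ne {a b c d : Bool} (h : c ≠ d) :
    a ≠ b ↔ (a ^^ c) = (b ^^ d) := by
  revert a b c d
  decide

def Quot.liftEquiv {α β : Sort*} (r : α → α → Prop) :
    {f : α → β // ∀ a b, r a b → f a = f b} ≃ (Quot r → β) where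
  toFun f := Quot.lift f.1 f.2
  invFun f := ⟨f ∘ Quot.mk r, fun _ _ h => congrArg f (Quot.sound h)⟩
  right_inv f := funext (Quot.ind fun _ => rfl)

def xorRightEquiv {X : Type*} (t : X → Bool) : (X → Bool) ≃ (X → Bool) :=
  Function.Involutive.toPerm (fun s x => s x ^^ t x) fun s => by funext x; simp

namespace Equiv.Perm

variable {Y : Type*} {σ τ : Perm Y}

theorem not_sameCycle_mul_apply_self (hσ : Function.Involutive σ) (hτ : Function.Involutive τ)
    (hσ_ne : ∀ y, σ y ≠ y) (hτ_ne : ∀ y, τ y ≠ y) (y : Y) : ¬(τ * σ).SameCycle y (σ y) := by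
  set ρ := τ * σ
  have hσσ : σ * σ = 1 := Equiv.ext hσ
  have hσ_inv : σ⁻¹ = σ := inv_eq_of_mul_eq_one_left hσσ
  have hτ_inv : τ⁻¹ = τ := inv_eq_of_mul_eq_one_left (Equiv.ext hτ)
  have hconj : ∀ (n : ℤ) z, σ ((ρ ^ n) z) = (ρ ^ (-n)) (σ z) := by
    have hρ : σ * ρ * σ⁻¹ = ρ⁻¹ := by
      rw [hσ_inv, mul_inv_rev, hσ_inv, hτ_inv, mul_assoc, mul_assoc, hσσ, mul_one]
    intro n z
    have h : σ * ρ ^ n = ρ ^ (-n) * σ := by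
      rw [zpow_neg, ← inv_zpow, ← hρ, conj_zpow, inv_mul_cancel_right]
    exact DFunLike.congr_fun h z
  rintro ⟨k, hk⟩
  obtain ⟨j, rfl | rfl⟩ := Int.even_or_odd' k
  · apply hσ_ne ((ρ ^ j) y)
    rw [hconj, ← hk, ← mul_apply, ← zpow_add]
    congr 2
    ring
  · apply hτ_ne (σ ((ρ ^ j) y))
    calc τ (σ ((ρ ^ j) y)) = (ρ ^ (1 + j)) y := by rw [zpow_add, zpow_one]; rfl
      _ = (ρ ^ (-j) * ρ ^ (2 * j + 1)) y := by rw [← zpow_add]; congr 2; ring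
      _ = σ ((ρ ^ j) y) := by rw [mul_apply, hk, hconj]

theorem exists_bool_apply_ne_of_involutive (hσ : Function.Involutive σ)
    (hτ : Function.Involutive τ) (hσ_ne : ∀ y, σ y ≠ y) (hτ_ne : ∀ y, τ y ≠ y) :
    ∃ s : Y → Bool, ∀ y, s (σ y) ≠ s y ∧ s (τ y) ≠ s y := by
  let : LinearOrder (Quotient (SameCycle.setoid (τ * σ))) :=
    IsWellOrder.linearOrder WellOrderingRel
  let c : Y → Quotient (SameCycle.setoid (τ * σ)) := Quotient.mk _
  have hc_σ : ∀ y, c (σ y) ≠ c y := fun y h =>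
    not_sameCycle_mul_apply_self hσ hτ hσ_ne hτ_ne y (Quotient.exact h).symm
  have hc_τ : ∀ y, c (τ y) = c (σ y) := fun y =>
    (Quotient.sound (⟨1, by simp [hσ y]⟩ : (τ * σ).SameCycle (σ y) (τ y))).symm
  refine ⟨fun y => decide (c y < c (σ y)), fun y => ?_⟩
  have key : decide (c (σ y) < c y) ≠ decide (c y < c (σ y)) := by
    rcases lt_or_gt_of_ne (hc_σ y) with h | h <;> simp [h, h.not_gt]
  dsimp only
  rw [hσ y, ← hc_τ (τ y), hτ y, hc_τ y]
  exact ⟨key, key⟩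

end Equiv.Perm

section Alternating

variable {X : Type*} {i r : X → X}

def flipFixed [DecidableEq X] (g : X → X) (p : X × Bool) : X × Bool :=
  if g p.1 = p.1 then (p.1, !p.2) else (g p.1, p.2)

theorem flipFixed_apply_of_ne [DecidableEq X] {g : X → X} {x : X} (h : g x ≠ x) (b : Bool) :
    flipFixed g (x, b) = (g x, b) :=
  if_neg h

theorem flipFixed_ne [DecidableEq X] (g : X → X) (p : X × Bool) : flipFixed g p ≠ p := by
  unfold flipFixed
  split_ifs with h
  · simp [Prod.ext_iff]
  · simp [Prod.ext_iff, h]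

theorem involutive_flipFixed [DecidableEq X] {g : X → X} (hg : Function.Involutive g) :
    Function.Involutive (flipFixed g) := by
  rintro ⟨x, b⟩
  by_cases h : g x = x
  · simp [flipFixed, h]
  · rw [flipFixed_apply_of_ne h, flipFixed_apply_of_ne (by rwa [hg x, ne_comm]), hg x]

theorem exists_isAlternating (hi : Function.Involutive i) (hr : Function.Involutive r) :
    ∃ s, IsAlternating i r s := by
  classical
  obtain ⟨s, hs⟩ := Equiv.Perm.exists_bool_apply_ne_of_involutive
    (σ := (involutive_flipFixed hi).toPerm) (τ := (involutive_flipFixed hr).toPerm)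
    (involutive_flipFixed hi) (involutive_flipFixed hr) (flipFixed_ne i) (flipFixed_ne r)
  refine ⟨fun x => s (x, false), fun x => ⟨fun hx => ?_, fun hx => ?_⟩⟩
  · simpa [flipFixed_apply_of_ne hx] using (hs (x, false)).1
  · simpa [flipFixed_apply_of_ne hx] using (hs (x, false)).2

theorem IsAlternating.isAlternating_iff_xor {t : X → Bool} (ht : IsAlternating i r t)
    {s : X → Bool} :
    IsAlternating i r s ↔ ∀ x y, irRel i r x y → (s x ^^ t x) = (s y ^^ t y) := by
  constructor
  · rintro hs x _ (rfl | rfl)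
    · by_cases h : i x = x
      · rw [h]
      · exact ((Bool.ne_iff_xor_eq_xor_of_ne ((ht x).1 h)).1 ((hs x).1 h)).symm
    · by_cases h : r x = x
      · rw [h]
      · exact ((Bool.ne_iff_xor_eq_xor_of_ne ((ht x).2 h)).1 ((hs x).2 h)).symm
  · intro hs x
    exact ⟨fun h => (Bool.ne_iff_xor_eq_xor_of_ne ((ht x).1 h)).2 (hs _ _ (Or.inl rfl)).symm,
      fun h => (Bool.ne_iff_xor_eq_xor_of_ne ((ht x).2 h)).2 (hs _ _ (Or.inr rfl)).symm⟩

theorem irClass_eq_iff {x y : X} :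
    irClass i r x = irClass i r y ↔ Quot.mk (irRel i r) x = Quot.mk (irRel i r) y := by
  have eqv := Relation.EqvGen.is_equivalence (irRel i r)
  rw [Quot.eq]
  refine ⟨fun h => (h ▸ Relation.EqvGen.refl y : y ∈ irClass i r x), fun h => ?_⟩
  exact Set.ext fun _ => ⟨eqv.trans (eqv.symm h), eqv.trans h⟩

variable (i r) in
theorem ncard_setOf_irClass :
    {C : Set X | ∃ x, C = irClass i r x}.ncard = Nat.card (Quot (irRel i r)) := by
  have hclass : ∀ x y, irRel i r x y → irClass i r x = irClass i r y :=
    fun _ _ h => irClass_eq_iff.2 (Quot.sound h)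
  have hinj : Function.Injective (Quot.lift _ hclass) :=
    Quot.ind fun _ => Quot.ind fun _ h => irClass_eq_iff.1 h
  rw [← Set.ncard_range_of_injective hinj, Set.range_quot_lift]
  exact congrArg Set.ncard (Set.ext fun _ => exists_congr fun _ => eq_comm)

end Alternating

/-- If `X` has exactly `m` ir classes, then there are exactly `2 ^ m` alternating
functions `s : X → Bool`. -/
theorem card_alternating_eq_two_pow {X : Type*} [Fintype X] (i r : X → X)
    (hi : Function.Involutive i) (hr : Function.Involutive r)
    (m : ℕ) (hm : ({C : Set X | ∃ x, C = irClass i r x}).ncard = m) :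
    Nat.card {s : X → Bool // IsAlternating i r s} = 2 ^ m := by
  obtain ⟨t, ht⟩ := exists_isAlternating hi hr
  let e : {s // IsAlternating i r s} ≃ {u : X → Bool // ∀ x y, irRel i r x y → u x = u y} :=
    (xorRightEquiv t).subtypeEquiv fun _ => ht.isAlternating_iff_xor
  rw [Nat.card_congr (e.trans (Quot.liftEquiv _)), Nat.card_fun, ← hm, ncard_setOf_irClass,
    Nat.card_eq_fintype_card (α := Bool), Fintype.card_bool]
end
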